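/- Let Q be an N × p real matrix with orthonormal columns, and let ξ be a probability vector on {1,…,N} with R(ξ) = Qᵀ D(ξ) Q invertible, where D(ξ) = diag(ξ₁,…,ξ_N). Then the largest eigenvalue of U(ξ) = R(ξ)^{-1} S(ξ) R(ξ)^{-1}, where S(ξ) = Qᵀ D(ξ)² Q, is at least 1. -/

import Mathlib

/-!
Let `w` be a unit eigenvector of `R`, say `R w = c w`. Since `R` is symmetric,
`wᵀ U w = wᵀ S w / c²`. With `y = Q w`, a unit vector because `Qᵀ Q = 1`, Cauchy–Schwarz gives
`c² = (∑ ξᵢ yᵢ²)² ≤ (∑ ξᵢ² yᵢ²)(∑ yᵢ²) = wᵀ S w`. So the Rayleigh quotient of `U` at `w` is at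
least `1`, hence so is the largest eigenvalue of `U`.
-/

open Matrix

namespace Matrix

variable {m n : Type*} [Fintype m] [Fintype n]

theorem IsHermitian.eigenvectorBasis_dotProduct_self [DecidableEq n] {A : Matrix n n ℝ}
    (hA : A.IsHermitian) (j : n) :
    ⇑(hA.eigenvectorBasis j) ⬝ᵥ ⇑(hA.eigenvectorBasis j) = 1 :=
  hA.eigenvectorBasis.inner_eq_one j

theorem IsHermitian.exists_mem_spectrum_dotProduct_mulVec_le [DecidableEq n]
    {A : Matrix n n ℝ} (hA : A.IsHermitian) {w : n → ℝ} (hw : w ⬝ᵥ w = 1) :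
    ∃ μ ∈ spectrum ℝ A, w ⬝ᵥ (A *ᵥ w) ≤ μ := by
  set V : Matrix n n ℝ := (hA.eigenvectorUnitary : Matrix n n ℝ)
  set c : n → ℝ := Vᵀ *ᵥ w
  have hVt : star V = Vᵀ := rfl
  have hVV : V * Vᵀ = 1 := mem_unitaryGroup_iff.mp hA.eigenvectorUnitary.2
  have hquad : w ⬝ᵥ (A *ᵥ w) = ∑ i, hA.eigenvalues i * c i ^ 2 := by
    conv_lhs => rw [hA.spectral_theorem, Unitary.conjStarAlgAut_apply]
    rw [← mulVec_mulVec, ← mulVec_mulVec, dotProduct_mulVec, hVt, ← mulVec_transpose]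
    simp only [dotProduct, mulVec_diagonal, Function.comp_apply, RCLike.ofReal_real_eq_id, id]
    exact Finset.sum_congr rfl fun i _ => by ring
  have hc : ∑ i, c i ^ 2 = 1 := by
    have : c ⬝ᵥ c = w ⬝ᵥ w := by
      rw [dotProduct_mulVec, vecMul_transpose, mulVec_mulVec, hVV, one_mulVec]
    rw [hw] at this
    simpa only [dotProduct, sq] using this
  have : Nonempty n := by
    by_contra! h
    simp [dotProduct] at hw
  obtain ⟨i, hi⟩ := Finite.exists_max hA.eigenvalues
  refine ⟨hA.eigenvalues i, hA.eigenvalues_mem_spectrum_real i, ?_⟩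
  calc w ⬝ᵥ (A *ᵥ w) = ∑ j, hA.eigenvalues j * c j ^ 2 := hquad
    _ ≤ ∑ j, hA.eigenvalues i * c j ^ 2 := by gcongr with j; exact hi j
    _ = hA.eigenvalues i := by rw [← Finset.mul_sum, hc, mul_one]

theorem dotProduct_transpose_mul_diagonal_mul_mulVec [DecidableEq m] {α : Type*} [CommSemiring α]
    (Q : Matrix m n α) (d : m → α) (w : n → α) :
    w ⬝ᵥ ((Qᵀ * diagonal d * Q) *ᵥ w) = ∑ i, d i * (Q *ᵥ w) i ^ 2 := by
  rw [← mulVec_mulVec, ← mulVec_mulVec, dotProduct_mulVec, vecMul_transpose]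
  simp only [dotProduct, mulVec_diagonal]
  exact Finset.sum_congr rfl fun i _ => by ring

theorem sq_dotProduct_transpose_mul_diagonal_mul_mulVec_le [DecidableEq m] [DecidableEq n]
    {Q : Matrix m n ℝ} (hQ : Qᵀ * Q = 1)
    (d : m → ℝ) (w : n → ℝ) :
    (w ⬝ᵥ ((Qᵀ * diagonal d * Q) *ᵥ w)) ^ 2
      ≤ w ⬝ᵥ ((Qᵀ * (diagonal d * diagonal d) * Q) *ᵥ w) * (w ⬝ᵥ w) := by
  set y := Q *ᵥ w
  have hy : ∑ i, y i ^ 2 = w ⬝ᵥ w := by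
    simpa [hQ] using (dotProduct_transpose_mul_diagonal_mul_mulVec Q 1 w).symm
  rw [diagonal_mul_diagonal, dotProduct_transpose_mul_diagonal_mul_mulVec,
    dotProduct_transpose_mul_diagonal_mul_mulVec, ← hy]
  calc (∑ i, d i * y i ^ 2) ^ 2 = (∑ i, d i * y i * y i) ^ 2 := by simp only [sq, mul_assoc]
    _ ≤ (∑ i, (d i * y i) ^ 2) * ∑ i, y i ^ 2 := Finset.sum_mul_sq_le_sq_mul_sq _ _ _
    _ = (∑ i, d i * d i * y i ^ 2) * ∑ i, y i ^ 2 := by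
      congr 1; exact Finset.sum_congr rfl fun i _ => by ring

theorem inv_mulVec_eq_inv_smul_of_mulVec_eq_smul [DecidableEq n] {K : Type*} [Field K]
    {R : Matrix n n K} (hR : IsUnit R.det) {w : n → K} {c : K} (hw : R *ᵥ w = c • w) :
    R⁻¹ *ᵥ w = c⁻¹ • w := by
  have hw' : w = c • R⁻¹ *ᵥ w := by
    rw [← mulVec_smul, ← hw, mulVec_mulVec, nonsing_inv_mul _ hR, one_mulVec]
  rcases eq_or_ne c 0 with rfl | hc
  · rw [zero_smul] at hw'
    simp [hw']
  · rw [hw', smul_smul, inv_mul_cancel₀ hc, one_smul, ← hw']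

theorem dotProduct_inv_mul_mul_inv_mulVec_of_mulVec_eq_smul [DecidableEq n] {K : Type*} [Field K]
    {R : Matrix n n K} (hRs : R.IsSymm) (hR : IsUnit R.det) (S : Matrix n n K) {w : n → K} {c : K}
    (hw : R *ᵥ w = c • w) :
    w ⬝ᵥ ((R⁻¹ * S * R⁻¹) *ᵥ w) = (w ⬝ᵥ (S *ᵥ w)) / c ^ 2 := by
  have hRw := inv_mulVec_eq_inv_smul_of_mulVec_eq_smul hR hw
  rw [← mulVec_mulVec, ← mulVec_mulVec, hRw, dotProduct_mulVec, ← mulVec_transpose,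
    transpose_nonsing_inv, hRs.eq, hRw, mulVec_smul, smul_dotProduct, dotProduct_smul]
  simp only [smul_eq_mul]
  ring

end Matrix

theorem stmt13_general {N p : ℕ} (hp : 0 < p)
    (Q : Matrix (Fin N) (Fin p) ℝ) (hQ : Qᵀ * Q = 1)
    (ξ : Fin N → ℝ)
    (R S U : Matrix (Fin p) (Fin p) ℝ)
    (hR : R = Qᵀ * diagonal ξ * Q) (hRinv : IsUnit R.det)
    (hS : S = Qᵀ * (diagonal ξ * diagonal ξ) * Q)
    (hU : U = R⁻¹ * S * R⁻¹) :
    ∃ μ ∈ spectrum ℝ U, (1 : ℝ) ≤ μ := by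
  have hRh : R.IsHermitian := hR ▸ isHermitian_conjTranspose_mul_mul Q (isHermitian_diagonal ξ)
  have hSh : S.IsHermitian := by
    rw [hS, diagonal_mul_diagonal]
    exact isHermitian_conjTranspose_mul_mul Q (isHermitian_diagonal _)
  have hUh : U.IsHermitian := by
    simpa only [hRh.inv.eq, ← hU] using isHermitian_conjTranspose_mul_mul R⁻¹ hSh
  let j : Fin p := ⟨0, hp⟩
  set w : Fin p → ℝ := ⇑(hRh.eigenvectorBasis j)
  set c := hRh.eigenvalues j
  have hRw : R *ᵥ w = c • w := hRh.mulVec_eigenvectorBasis j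
  have hww : w ⬝ᵥ w = 1 := hRh.eigenvectorBasis_dotProduct_self j
  have hc : c ≠ 0 := by
    rintro hc
    rw [hc, zero_smul] at hRw
    simp [eq_zero_of_mulVec_eq_zero hRinv.ne_zero hRw] at hww
  have hCS : c ^ 2 ≤ w ⬝ᵥ (S *ᵥ w) := by
    have := sq_dotProduct_transpose_mul_diagonal_mul_mulVec_le hQ ξ w
    rwa [← hR, ← hS, hRw, dotProduct_smul, hww, smul_eq_mul, mul_one, mul_one] at this
  obtain ⟨μ, hμ, hwμ⟩ := hUh.exists_mem_spectrum_dotProduct_mulVec_le hww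
  have hUw : w ⬝ᵥ (U *ᵥ w) = w ⬝ᵥ (S *ᵥ w) / c ^ 2 := hU ▸
    dotProduct_inv_mul_mul_inv_mulVec_of_mulVec_eq_smul (isHermitian_iff_isSymm.mp hRh) hRinv S hRw
  refine ⟨μ, hμ, ?_⟩
  calc (1 : ℝ) ≤ w ⬝ᵥ (S *ᵥ w) / c ^ 2 := (one_le_div (by positivity)).mpr hCS
    _ = w ⬝ᵥ (U *ᵥ w) := hUw.symm
    _ ≤ μ := hwμ

/-- For any design ξ with R(ξ) invertible, the largest
eigenvalue of U(ξ) = R⁻¹ S R⁻¹ is at least 1: some eigenvalue is ≥ 1. -/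
theorem stmt13 {N p : ℕ} (hp : 0 < p)
    (Q : Matrix (Fin N) (Fin p) ℝ) (hQ : Qᵀ * Q = 1)
    (ξ : Fin N → ℝ) (hξ0 : ∀ i, 0 ≤ ξ i) (hξ1 : ∑ i, ξ i = 1)
    (R S U : Matrix (Fin p) (Fin p) ℝ)
    (hR : R = Qᵀ * diagonal ξ * Q) (hRinv : IsUnit R.det)
    (hS : S = Qᵀ * (diagonal ξ * diagonal ξ) * Q)
    (hU : U = R⁻¹ * S * R⁻¹) :
    ∃ μ ∈ spectrum ℝ U, (1 : ℝ) ≤ μ :=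
  stmt13_general hp Q hQ ξ R S U hR hRinv hS hU
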